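/- Let S be a commutative ring, A an n × m matrix over S, and b ∈ S^n. The set of primes p ∈ Spec S such that the linear system A x = b is solvable over the residue field κ(p) is a constructible subset of Spec S. -/

import Mathlib

/-!
Gaussian elimination, run uniformly over `Spec S`. If every entry of `A` lies in `p`, the system
over `κ(p)` is solvable exactly when every entry of `b` lies in `p`: a closed condition. Otherwise
some entry `A i j` is a unit in `κ(p)`; on the open set where it does not vanish, pivoting on it
replaces the system by an equivalent one with one equation fewer, whose coefficients are again
images of elements of `S`. Induction on the number of equations finishes the argument.
-/

/-- A subset of a topological space is constructible if it is a finite union of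
sets of the form `U ∩ C` with `U` open and `C` closed. -/
def IsConstructibleSet {X : Type*} [TopologicalSpace X] (s : Set X) : Prop :=
  ∃ (k : ℕ) (U C : Fin k → Set X), (∀ i, IsOpen (U i)) ∧ (∀ i, IsClosed (C i)) ∧
    s = ⋃ i, U i ∩ C i

/-- The canonical map from `S` to the residue field of the prime `p`. -/
noncomputable def resMap {S : Type*} [CommRing S] (p : PrimeSpectrum S) :
    S →+* IsLocalRing.ResidueField (Localization.AtPrime p.asIdeal) :=
  (IsLocalRing.residue _).comp (algebraMap S (Localization.AtPrime p.asIdeal))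

section IsConstructibleSet

variable {X : Type*} [TopologicalSpace X]

lemma isConstructibleSet_iUnion_inter {ι : Type*} [Finite ι] {U C : ι → Set X}
    (hU : ∀ i, IsOpen (U i)) (hC : ∀ i, IsClosed (C i)) :
    IsConstructibleSet (⋃ i, U i ∩ C i) := by
  obtain ⟨k, ⟨e⟩⟩ := Finite.exists_equiv_fin ι
  exact ⟨k, U ∘ e.symm, C ∘ e.symm, fun _ => hU _, fun _ => hC _,
    (e.symm.surjective.iUnion_comp fun i => U i ∩ C i).symm⟩

lemma IsOpen.isConstructibleSet_inter {U C : Set X} (hU : IsOpen U) (hC : IsClosed C) :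
    IsConstructibleSet (U ∩ C) := by
  rw [← Set.iUnion_const (ι := Unit) (U ∩ C)]
  exact isConstructibleSet_iUnion_inter (fun _ => hU) (fun _ => hC)

lemma IsConstructibleSet.iUnion {ι : Type*} [Finite ι] {s : ι → Set X}
    (h : ∀ i, IsConstructibleSet (s i)) : IsConstructibleSet (⋃ i, s i) := by
  choose k U C hU hC hs using h
  have hunion : ⋃ i, s i = ⋃ q : Σ i, Fin (k i), U q.1 q.2 ∩ C q.1 q.2 := by
    simp_rw [hs, Set.iUnion_sigma]
  rw [hunion]
  exact isConstructibleSet_iUnion_inter (fun _ => hU _ _) (fun _ => hC _ _)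

lemma IsConstructibleSet.union {s t : Set X} (hs : IsConstructibleSet s)
    (ht : IsConstructibleSet t) : IsConstructibleSet (s ∪ t) := by
  rw [Set.union_eq_iUnion]
  exact IsConstructibleSet.iUnion (Bool.forall_bool.2 ⟨ht, hs⟩)

lemma IsConstructibleSet.open_inter {s U : Set X} (hs : IsConstructibleSet s)
    (hU : IsOpen U) : IsConstructibleSet (U ∩ s) := by
  obtain ⟨k, V, C, hV, hC, rfl⟩ := hs
  simp_rw [Set.inter_iUnion, ← Set.inter_assoc]
  exact isConstructibleSet_iUnion_inter (fun i => hU.inter (hV i)) hC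

end IsConstructibleSet

namespace Matrix

variable {R T : Type*} [CommRing R] [CommRing T] {n m : ℕ}

def pivotElim (M : Matrix (Fin (n + 1)) (Fin m) R) (i : Fin (n + 1)) (j : Fin m) :
    Matrix (Fin n) (Fin m) R :=
  of fun k l => M i j * M (i.succAbove k) l - M (i.succAbove k) j * M i l

def pivotElimVec (M : Matrix (Fin (n + 1)) (Fin m) R) (c : Fin (n + 1) → R)
    (i : Fin (n + 1)) (j : Fin m) : Fin n → R :=
  fun k => M i j * c (i.succAbove k) - M (i.succAbove k) j * c i

lemma pivotElim_mulVec (M : Matrix (Fin (n + 1)) (Fin m) R) (x : Fin m → R)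
    (i : Fin (n + 1)) (j : Fin m) :
    M.pivotElim i j *ᵥ x = M.pivotElimVec (M *ᵥ x) i j := by
  ext k
  simp only [pivotElim, pivotElimVec, mulVec, dotProduct, of_apply, sub_mul, mul_assoc,
    Finset.sum_sub_distrib, Finset.mul_sum]

lemma map_pivotElim (M : Matrix (Fin (n + 1)) (Fin m) R) (f : R →+* T)
    (i : Fin (n + 1)) (j : Fin m) :
    (M.pivotElim i j).map f = (M.map f).pivotElim i j := by
  ext k l
  simp [pivotElim]

lemma comp_pivotElimVec (M : Matrix (Fin (n + 1)) (Fin m) R) (c : Fin (n + 1) → R)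
    (f : R →+* T) (i : Fin (n + 1)) (j : Fin m) :
    f ∘ M.pivotElimVec c i j = (M.map f).pivotElimVec (f ∘ c) i j := by
  ext k
  simp [pivotElimVec]

lemma exists_mulVec_eq_iff_pivotElim {K : Type*} [Field K]
    (M : Matrix (Fin (n + 1)) (Fin m) K) (c : Fin (n + 1) → K)
    {i : Fin (n + 1)} {j : Fin m} (hpivot : M i j ≠ 0) :
    (∃ x, M *ᵥ x = c) ↔ ∃ x, M.pivotElim i j *ᵥ x = M.pivotElimVec c i j := by
  refine ⟨fun ⟨x, hx⟩ => ⟨x, hx ▸ pivotElim_mulVec M x i j⟩, fun ⟨y, hy⟩ => ?_⟩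
  -- Correct `y` along the pivot column so that equation `i` holds too.
  set t := (c i - (M *ᵥ y) i) / M i j
  have ht : M i j * t = c i - (M *ᵥ y) i := mul_div_cancel₀ _ hpivot
  have hcol : ∀ r, (M *ᵥ (y + t • Pi.single j 1)) r = (M *ᵥ y) r + t * M r j := by
    intro r
    simp [mulVec_add, mulVec_smul, mul_comm]
  refine ⟨y + t • Pi.single j 1, funext fun r => ?_⟩
  rw [hcol]
  rcases eq_or_ne r i with rfl | hr
  · linear_combination ht
  · obtain ⟨k, rfl⟩ := Fin.exists_succAbove_eq hr
    have hk := congrFun (pivotElim_mulVec M y i j ▸ hy) k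
    simp only [pivotElimVec] at hk
    exact mul_left_cancel₀ hpivot (by linear_combination hk + M (i.succAbove k) j * ht)

lemma exists_mulVec_eq_iff_eq_zero_or_pivotElim {K : Type*} [Field K]
    (M : Matrix (Fin (n + 1)) (Fin m) K) (c : Fin (n + 1) → K) :
    (∃ x, M *ᵥ x = c) ↔ (M = 0 ∧ c = 0) ∨
      ∃ i j, M i j ≠ 0 ∧ ∃ x, M.pivotElim i j *ᵥ x = M.pivotElimVec c i j := by
  by_cases hM : M = 0
  · subst hM
    simp [eq_comm]
  · obtain ⟨i, j, hij⟩ : ∃ i j, M i j ≠ 0 := by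
      by_contra! h
      exact hM (ext h)
    refine ⟨fun h => Or.inr ⟨i, j, hij, (exists_mulVec_eq_iff_pivotElim M c hij).1 h⟩, ?_⟩
    rintro (⟨h, -⟩ | ⟨i', j', hij', h⟩)
    · exact absurd h hM
    · exact (exists_mulVec_eq_iff_pivotElim M c hij').2 h

end Matrix

open Matrix PrimeSpectrum

section SolvableLocus

variable {S : Type*} [CommRing S]

lemma resMap_eq_zero_iff (p : PrimeSpectrum S) (s : S) :
    resMap p s = 0 ↔ s ∈ p.asIdeal := by
  rw [resMap, RingHom.comp_apply, IsLocalRing.residue_eq_zero_iff]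
  exact IsLocalization.AtPrime.to_map_mem_maximal_iff _ p.asIdeal s

def solvableLocus {n m : ℕ} (A : Matrix (Fin n) (Fin m) S) (b : Fin n → S) :
    Set (PrimeSpectrum S) :=
  {p | ∃ x, A.map (resMap p) *ᵥ x = resMap p ∘ b}

lemma solvableLocus_zero {m : ℕ} (A : Matrix (Fin 0) (Fin m) S) (b : Fin 0 → S) :
    solvableLocus A b = Set.univ :=
  Set.eq_univ_of_forall fun _ => ⟨0, funext fun i => i.elim0⟩

lemma solvableLocus_succ {n m : ℕ} (A : Matrix (Fin (n + 1)) (Fin m) S) (b : Fin (n + 1) → S) :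
    solvableLocus A b =
      zeroLocus (Set.range (fun q : Fin (n + 1) × Fin m => A q.1 q.2) ∪ Set.range b) ∪
      ⋃ q : Fin (n + 1) × Fin m, (zeroLocus {A q.1 q.2})ᶜ ∩
        solvableLocus (A.pivotElim q.1 q.2) (A.pivotElimVec b q.1 q.2) := by
  ext p
  rw [solvableLocus, Set.mem_ofPred_eq, exists_mulVec_eq_iff_eq_zero_or_pivotElim]
  simp only [solvableLocus, Set.mem_ofPred_eq, Set.mem_union, Set.mem_iUnion, Set.mem_inter_iff,
    Set.mem_compl_iff, mem_zeroLocus, Set.union_subset_iff, Set.range_subset_iff,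
    Set.singleton_subset_iff, SetLike.mem_coe, Prod.exists, Prod.forall, map_pivotElim,
    comp_pivotElimVec, ← resMap_eq_zero_iff p, ← Matrix.ext_iff, funext_iff, map_apply,
    Function.comp_apply, Matrix.zero_apply, Pi.zero_apply]

lemma isConstructibleSet_solvableLocus {n m : ℕ} (A : Matrix (Fin n) (Fin m) S)
    (b : Fin n → S) : IsConstructibleSet (solvableLocus A b) := by
  induction n with
  | zero =>
    rw [solvableLocus_zero, ← Set.univ_inter Set.univ]
    exact isOpen_univ.isConstructibleSet_inter isClosed_univ
  | succ n ih =>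
    rw [solvableLocus_succ, ← Set.univ_inter (zeroLocus _)]
    exact (isOpen_univ.isConstructibleSet_inter (isClosed_zeroLocus _)).union
      (IsConstructibleSet.iUnion fun _ => (ih _ _).open_inter (isClosed_zeroLocus _).isOpen_compl)

end SolvableLocus

/-- For an `n × m` matrix `A` over a commutative ring `S` and `b ∈ Sⁿ`, the set of primes `p`
such that the linear system `A x = b` is solvable over the residue field `κ(p)` is a
constructible subset of `Spec S`. -/
theorem stmt1 {S : Type*} [CommRing S] {n m : ℕ}
    (A : Matrix (Fin n) (Fin m) S) (b : Fin n → S) :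
    IsConstructibleSet {p : PrimeSpectrum S |
      ∃ x : Fin m → IsLocalRing.ResidueField (Localization.AtPrime p.asIdeal),
        (A.map (resMap p)).mulVec x = fun i => resMap p (b i)} :=
  isConstructibleSet_solvableLocus A b
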